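/- arXiv:1706.02335 — 2 statements merged into one kernel-verified Lean document; each statement's English description precedes it below -/
import Mathlib

section
/- There exists an outerplanar graph G with maximum degree 3 and girth 3 such that χ_i(G) = 4. -/
open SimpleGraph

variable {V : Type*}

/-- An injective coloring: vertices with a common neighbor get distinct colors. -/
def IsInjColoring (G : SimpleGraph V) {k : ℕ} (c : V → Fin k) : Prop :=
  ∀ u v w : V, G.Adj u w → G.Adj v w → u ≠ v → c u ≠ c v

/-- The injective chromatic number: least `k` admitting an injective `k`-coloring. -/
noncomputable def injChrom (G : SimpleGraph V) : ℕ :=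
  sInf {k : ℕ | ∃ c : V → Fin k, IsInjColoring G c}

/-- Degree of a vertex. -/
noncomputable def deg (G : SimpleGraph V) (v : V) : ℕ :=
  Nat.card {u : V | G.Adj v u}

/-- Maximum degree. -/
noncomputable def maxDeg [Fintype V] (G : SimpleGraph V) : ℕ :=
  Finset.univ.sup (deg G)

/-- The common-neighbor graph `G^(2)`. -/
def cnGraph (G : SimpleGraph V) : SimpleGraph V where
  Adj u v := u ≠ v ∧ ∃ w, G.Adj u w ∧ G.Adj v w
  symm := by constructor; rintro u v ⟨h, w, hu, hv⟩; exact ⟨h.symm, w, hv, hu⟩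
  loopless := by constructor; rintro u ⟨h, -⟩; exact h rfl

/-- The square of a graph: distinct vertices at distance at most 2. -/
def sqGraph (G : SimpleGraph V) : SimpleGraph V where
  Adj u v := u ≠ v ∧ (G.Adj u v ∨ ∃ w, G.Adj u w ∧ G.Adj v w)
  symm := by
    constructor
    rintro u v ⟨h, hc⟩
    refine ⟨h.symm, ?_⟩
    rcases hc with h' | ⟨w, hu, hv⟩
    · exact Or.inl h'.symm
    · exact Or.inr ⟨w, hv, hu⟩
  loopless := by constructor; rintro u ⟨h, -⟩; exact h rfl

/-- `H` is a minor of `G`, via branch sets. -/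
def IsMinor {W : Type*} (H : SimpleGraph W) (G : SimpleGraph V) : Prop :=
  ∃ B : W → Set V,
    (∀ w, (B w).Nonempty) ∧
    (∀ w, (G.induce (B w)).Connected) ∧
    (Pairwise fun w₁ w₂ => Disjoint (B w₁) (B w₂)) ∧
    ∀ ⦃w₁ w₂⦄, H.Adj w₁ w₂ → ∃ v₁ ∈ B w₁, ∃ v₂ ∈ B w₂, G.Adj v₁ v₂

/-- Outerplanar: no `K₄` minor and no `K_{2,3}` minor. -/
def Outerplanar (G : SimpleGraph V) : Prop :=
  ¬ IsMinor (completeGraph (Fin 4)) G ∧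
  ¬ IsMinor (completeBipartiteGraph (Fin 2) (Fin 3)) G

/-- Two-connected: at least 3 vertices and deleting any vertex leaves it connected. -/
def TwoConnected [Fintype V] (G : SimpleGraph V) : Prop :=
  3 ≤ Fintype.card V ∧
  ∀ v : V, (((⊤ : G.Subgraph).deleteVerts {v}).coe).Connected

/-- A chordless (induced) cycle. In a 2-connected outerplane graph these are
exactly the boundaries of the inner faces (when the graph is not a cycle). -/
def IsInducedCycle (G : SimpleGraph V) {u : V} (p : G.Walk u u) : Prop :=
  p.IsCycle ∧ ∀ a b : V, a ∈ p.support → b ∈ p.support → G.Adj a b → s(a, b) ∈ p.edges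

/-!
The diamond `K₄ - e` works. Its triangles give girth 3, and any two of its vertices have a common
neighbour, so an injective colouring must use four distinct colours. It has only four vertices, too
few to contain a `K_{2,3}` minor, and since it is not complete it has no `K₄` minor either.
-/

open SimpleGraph

variable {W : Type*}

section Minor

variable {H : SimpleGraph W} {G : SimpleGraph V}

lemma injective_of_pairwise_disjoint {B : W → Set V}
    (hB : Pairwise fun a b => Disjoint (B a) (B b)) {f : W → V} (hf : ∀ w, f w ∈ B w) :
    Function.Injective f :=
  fun a b hab => hB.eq (Set.not_disjoint_iff.2 ⟨_, hf a, hab ▸ hf b⟩)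

lemma IsMinor.card_le [Finite V] (h : IsMinor H G) : Nat.card W ≤ Nat.card V := by
  obtain ⟨B, hne, -, hdisj, -⟩ := h
  choose f hf using hne
  exact Nat.card_le_card_of_injective f (injective_of_pairwise_disjoint hdisj hf)

lemma IsMinor.exists_bijective_hom [Finite V] (h : IsMinor H G)
    (hcard : Nat.card V ≤ Nat.card W) : ∃ f : H →g G, Function.Bijective f := by
  obtain ⟨B, hne, -, hdisj, hadj⟩ := h
  choose f hf using hne
  have hbij := (injective_of_pairwise_disjoint hdisj hf).bijective_of_nat_card_le hcard
  have hB : ∀ w x, x ∈ B w → x = f w := by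
    intro w x hx
    obtain ⟨w', rfl⟩ := hbij.2 x
    rw [hdisj.eq (Set.not_disjoint_iff.2 ⟨_, hf w', hx⟩)]
  refine ⟨⟨f, fun hab => ?_⟩, hbij⟩
  obtain ⟨v₁, h₁, v₂, h₂, hv⟩ := hadj hab
  rwa [hB _ _ h₁, hB _ _ h₂] at hv

lemma eq_top_of_isMinor_top [Finite V] (h : IsMinor (⊤ : SimpleGraph W) G)
    (hcard : Nat.card V ≤ Nat.card W) : G = ⊤ := by
  obtain ⟨f, hf⟩ := h.exists_bijective_hom hcard
  ext u v
  refine ⟨G.ne_of_adj, fun huv => ?_⟩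
  obtain ⟨a, rfl⟩ := hf.2 u
  obtain ⟨b, rfl⟩ := hf.2 v
  exact f.map_adj ((top_adj _ _).2 fun hab => huv (hab ▸ rfl))

lemma outerplanar_of_card_le_four [Finite V] (hV : Nat.card V ≤ 4) (hG : G ≠ ⊤) :
    Outerplanar G := by
  refine ⟨fun h => hG (eq_top_of_isMinor_top h (by simpa using hV)), fun h => ?_⟩
  have : 5 ≤ Nat.card V := by simpa using h.card_le
  omega

end Minor

lemma deg_eq_degree (G : SimpleGraph V) (v : V) [Fintype (G.neighborSet v)] :
    deg G v = G.degree v := by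
  rw [deg, ← card_neighborSet_eq_degree, ← Nat.card_eq_fintype_card]
  rfl

lemma maxDeg_eq_maxDegree [Fintype V] (G : SimpleGraph V) [DecidableRel G.Adj] :
    maxDeg G = G.maxDegree := by
  refine le_antisymm (Finset.sup_le fun v _ => ?_)
    (G.maxDegree_le_of_forall_degree_le _ fun v => ?_)
  · exact deg_eq_degree G v ▸ G.degree_le_maxDegree v
  · exact deg_eq_degree G v ▸ Finset.le_sup (Finset.mem_univ v)

lemma girth_eq_three_of_adj {G : SimpleGraph V} {a b c : V}
    (hab : G.Adj a b) (hbc : G.Adj b c) (hca : G.Adj c a) : G.girth = 3 := by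
  let w : G.Walk a a := .cons hab (.cons hbc (.cons hca .nil))
  have hw : w.IsCycle := by
    have := hab.ne; have := hbc.ne; have := hca.ne
    rw [Walk.cons_isCycle_iff]
    constructor <;> simp <;> grind
  have : G.egirth = 3 := le_antisymm (egirth_le_length hw) three_le_egirth
  simp [girth, this]

section InjectiveColoring

variable {G : SimpleGraph V}

lemma isInjColoring_of_injective {k : ℕ} {c : V → Fin k} (hc : Function.Injective c) :
    IsInjColoring G c :=
  fun _ _ _ _ _ huv h => huv (hc h)

lemma injChrom_le_card [Fintype V] : injChrom G ≤ Fintype.card V :=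
  Nat.sInf_le ⟨_, isInjColoring_of_injective (Fintype.equivFin V).injective⟩

lemma IsInjColoring.injective {k : ℕ} {c : V → Fin k} (hc : IsInjColoring G c)
    (hG : cnGraph G = ⊤) : Function.Injective c := by
  intro u v huv
  by_contra hne
  obtain ⟨-, w, hu, hv⟩ : (cnGraph G).Adj u v := hG ▸ hne
  exact hc u v w hu hv hne huv

lemma injChrom_eq_card [Fintype V] (hG : cnGraph G = ⊤) : injChrom G = Fintype.card V := by
  refine le_antisymm injChrom_le_card
    (le_csInf ⟨_, _, isInjColoring_of_injective (Fintype.equivFin V).injective⟩ ?_)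
  rintro k ⟨c, hc⟩
  simpa using Fintype.card_le_of_injective c (hc.injective hG)

end InjectiveColoring

def diamond : SimpleGraph (Fin 4) := fromRel fun u v => s(u, v) ≠ s(0, 3)

instance : DecidableRel diamond.Adj :=
  inferInstanceAs (DecidableRel (fromRel fun u v : Fin 4 => s(u, v) ≠ s(0, 3)).Adj)

lemma diamond_ne_top : diamond ≠ ⊤ := by
  intro h
  have : diamond.Adj 0 3 := h ▸ (top_adj _ _).2 (by decide)
  exact absurd this (by decide)

lemma cnGraph_diamond : cnGraph diamond = ⊤ := by
  ext u v
  simp only [cnGraph, top_adj, and_iff_left_iff_imp]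
  revert u v; decide

lemma maxDegree_diamond : diamond.maxDegree = 3 :=
  le_antisymm (diamond.maxDegree_le_of_forall_degree_le 3 (by decide))
    ((by decide : diamond.degree 1 = 3) ▸ degree_le_maxDegree diamond 1)

/-- there is an outerplanar graph with `Δ = 3`, girth 3 and `χ_i = 4`. -/
theorem stmt11 :
    ∃ (n : ℕ) (G : SimpleGraph (Fin n)),
      Outerplanar G ∧ maxDeg G = 3 ∧ G.girth = 3 ∧ injChrom G = 4 :=
  ⟨4, diamond, outerplanar_of_card_le_four (by simp) diamond_ne_top,
    (maxDeg_eq_maxDegree diamond).trans maxDegree_diamond,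
    girth_eq_three_of_adj (a := 0) (b := 1) (c := 2) (by decide) (by decide) (by decide),
    (injChrom_eq_card cnGraph_diamond).trans (Fintype.card_fin 4)⟩
end

section
/- Let G be a connected graph and L a list assignment with |L(v)| ≥ deg(v) for all v. If |L(v)| > deg(v) for some vertex v, or some block of G is neither a complete graph nor an induced odd cycle, then G has a proper coloring choosing each vertex's color from its list. -/
open SimpleGraph

variable {V : Type*}

/-- A vertex set inducing a connected subgraph with no cut vertex. -/
def NoCutVertex (G : SimpleGraph V) (B : Set V) : Prop :=
  (G.induce B).Connected ∧ ∀ v ∈ B, B ≠ {v} → (G.induce (B \ {v})).Connected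

/-- A block: a maximal set of vertices inducing a connected subgraph
with no cut vertex. -/
def IsBlock (G : SimpleGraph V) (B : Set V) : Prop :=
  NoCutVertex G B ∧ ∀ B' : Set V, B ⊆ B' → NoCutVertex G B' → B = B'

/-!
Colour greedily towards a vertex with slack (`|L x| > deg x`): a connected graph on at least two
vertices has a non-cut vertex other than any given one; colouring it first and deleting its colour
from the lists of its neighbours preserves the degree condition, so induction applies.

Without slack, a cut vertex `v` lets one colour first a component `K` of `G - v` avoiding the
block `B` (the neighbours of `v` in `K` have slack there), and then the rest, which still contains
`B`, from the lists with the colours of the neighbours in `K` removed.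

A graph without cut vertex which is neither complete nor an odd cycle is coloured directly. If
adjacent `u`, `w` have lists with `a ∈ L u \ L w`, colour `u` by `a`: then `w` has slack in `G - u`.
Otherwise all lists are equal and the graph is regular. Degree `2` means an even cycle. For degree
at least `3`, Lovász's lemma gives non-adjacent neighbours `a`, `b` of a vertex `x` with `G - a - b`
connected; colouring `a` and `b` alike leaves slack at `x`. The lemma comes from a distance-two pair
if `G` is `3`-connected, and otherwise from two end blocks of `G - x` for a suitable `x`.
-/

namespace SimpleGraph

variable {α : Type*} {G : SimpleGraph V}

/-- Reachability along edges inside `S`; `G.ReachIn S x x` holds even if `x ∉ S`. -/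
def ReachIn (G : SimpleGraph V) (S : Set V) : V → V → Prop :=
  Relation.ReflTransGen fun x y => x ∈ S ∧ y ∈ S ∧ G.Adj x y

namespace ReachIn

variable {S T K : Set V} {x y z v : V}

theorem refl : G.ReachIn S x x := Relation.ReflTransGen.refl

theorem of_adj (hx : x ∈ S) (hy : y ∈ S) (h : G.Adj x y) : G.ReachIn S x y :=
  Relation.ReflTransGen.single ⟨hx, hy, h⟩

theorem trans (h : G.ReachIn S x y) (h' : G.ReachIn S y z) : G.ReachIn S x z :=
  Relation.ReflTransGen.trans h h'

theorem symm (h : G.ReachIn S x y) : G.ReachIn S y x := by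
  induction h with
  | refl => exact refl
  | tail _ hyz ih => exact (of_adj hyz.2.1 hyz.1 hyz.2.2.symm).trans ih

theorem mono (hST : S ⊆ T) (h : G.ReachIn S x y) : G.ReachIn T x y :=
  Relation.ReflTransGen.mono (fun _ _ h => ⟨hST h.1, hST h.2.1, h.2.2⟩) _ _ h

theorem mem (h : G.ReachIn S x y) (hx : x ∈ S) : y ∈ S := by
  induction h with
  | refl => exact hx
  | tail _ hyz _ => exact hyz.2.1

theorem eq_of_forall_adj {β : Type*} {f : V → β} (hf : ∀ u ∈ S, ∀ w ∈ S, G.Adj u w → f u = f w)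
    (h : G.ReachIn S x y) : f x = f y := by
  induction h with
  | refl => rfl
  | tail _ hyz ih => exact ih.trans (hf _ hyz.1 _ hyz.2.1 hyz.2.2)

theorem mem_of_closed (hK : ∀ k ∈ K, ∀ y ∈ S, G.Adj k y → y ∈ K) (h : G.ReachIn S x y)
    (hx : x ∈ K) : y ∈ K := by
  induction h with
  | refl => exact hx
  | tail _ hyz ih => exact hK _ ih _ hyz.2.1 hyz.2.2

theorem exists_adj_of_mem_of_notMem (h : G.ReachIn S x y) (hx : x ∈ K) (hy : y ∉ K) :
    ∃ k ∈ K, ∃ y' ∈ S, y' ∉ K ∧ G.Adj k y' := by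
  by_contra! hK
  exact hy (h.mem_of_closed (fun k hk y' hy' hadj => by_contra fun h => hK k hk y' hy' h hadj) hx)

/-- An excursion into `K` enters and leaves through `v`, so it can be cut out. -/
theorem sdiff_of_door (hK : ∀ k ∈ K, ∀ y ∈ S, G.Adj k y → y ∈ K ∨ y = v)
    (h : G.ReachIn S x y) (hx : x ∉ K) (hy : y ∉ K) : G.ReachIn (S \ K) x y := by
  suffices (x ∉ K → G.ReachIn (S \ K) x y) ∧ (x ∈ K → G.ReachIn (S \ K) v y) from this.1 hx
  clear hx
  induction h using Relation.ReflTransGen.head_induction_on with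
  | refl => exact ⟨fun _ => refl, fun h => absurd h hy⟩
  | @head x w hxw _ ih =>
    obtain ⟨hxS, hwS, hxw⟩ := hxw
    refine ⟨fun hx => ?_, fun hx => ?_⟩
    · by_cases hw : w ∈ K
      · obtain rfl := (hK w hw x hxS hxw.symm).resolve_left hx
        exact ih.2 hw
      · exact (of_adj (S := S \ K) ⟨hxS, hx⟩ ⟨hwS, hw⟩ hxw).trans (ih.1 hw)
    · by_cases hw : w ∈ K
      · exact ih.2 hw
      · obtain rfl := (hK x hx w hwS hxw).resolve_left hw
        exact ih.1 hw

theorem inter_insert_of_door (hK : ∀ k ∈ K, ∀ y ∈ S, G.Adj k y → y ∈ K ∨ y = v)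
    (h : G.ReachIn S x y) (hx : x ∈ K) (hy : y ∉ K) : G.ReachIn (S ∩ insert v K) x v := by
  induction h using Relation.ReflTransGen.head_induction_on with
  | refl => exact absurd hx hy
  | @head x w hxw _ ih =>
    obtain ⟨hxS, hwS, hxw⟩ := hxw
    rcases hK x hx w hwS hxw with hw | rfl
    · exact (of_adj (S := S ∩ insert v K) ⟨hxS, .inr hx⟩ ⟨hwS, .inr hw⟩ hxw).trans (ih hw)
    · exact of_adj (S := S ∩ insert w K) ⟨hxS, .inr hx⟩ ⟨hwS, .inl rfl⟩ hxw

end ReachIn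

section Connected

variable {S T : Set V} {x y z v : V}

theorem connected_induce_iff_reachIn :
    (G.induce S).Connected ↔ S.Nonempty ∧ ∀ x ∈ S, ∀ y ∈ S, G.ReachIn S x y := by
  refine ⟨fun h => ⟨Set.nonempty_coe_sort.mp h.nonempty, fun x hx y hy => ?_⟩,
    fun ⟨⟨x, hx⟩, h⟩ => ?_⟩
  · exact ((reachable_iff_reflTransGen _ _).mp (h.preconnected ⟨x, hx⟩ ⟨y, hy⟩)).lift
      Subtype.val fun a b hab => ⟨a.2, b.2, hab⟩
  · have hreach : ∀ y, G.ReachIn S x y → ∀ hy : y ∈ S,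
        (G.induce S).Reachable ⟨x, hx⟩ ⟨y, hy⟩ := by
      intro y hxy
      induction hxy with
      | refl => exact fun _ => .rfl
      | tail _ hyz ih => exact fun _ => (ih hyz.1).trans (Adj.reachable hyz.2.2)
    have : Nonempty S := ⟨⟨x, hx⟩⟩
    exact ⟨fun a b => (hreach a (h x hx a a.2) a.2).symm.trans (hreach b (h x hx b b.2) b.2)⟩

theorem connected_induce_of_forall_reachIn (hv : v ∈ S) (h : ∀ x ∈ S, G.ReachIn S x v) :
    (G.induce S).Connected :=
  connected_induce_iff_reachIn.mpr ⟨⟨v, hv⟩, fun x hx y hy => (h x hx).trans (h y hy).symm⟩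

theorem connected_induce_insert (hT : (G.induce T).Connected) (hy : y ∈ T) (hxy : G.Adj x y) :
    (G.induce (insert x T)).Connected := by
  refine connected_induce_of_forall_reachIn (.inr hy) fun z hz => ?_
  rcases hz with rfl | hz
  · exact .of_adj (.inl rfl) (.inr hy) hxy
  · exact ((connected_induce_iff_reachIn.mp hT).2 z hz y hy).mono (Set.subset_insert x T)

theorem connected_induce_setOf_reachIn (T : Set V) (z : V) :
    (G.induce {y | G.ReachIn T z y}).Connected := by
  refine connected_induce_of_forall_reachIn ReachIn.refl fun y hy => ReachIn.symm ?_
  induction hy with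
  | refl => exact .refl
  | @tail y y' hzy hyy' ih => exact ih.trans (.of_adj hzy (hzy.tail hyy') hyy'.2.2)

theorem exists_adj_of_connected_induce (hS : (G.induce S).Connected) (hx : x ∈ S) (hy : y ∈ S)
    (hxy : x ≠ y) : ∃ z ∈ S, G.Adj x z := by
  obtain ⟨_, rfl, z, hz, -, hxz⟩ := ((connected_induce_iff_reachIn.mp hS).2 x hx y hy)
    |>.exists_adj_of_mem_of_notMem (K := {x}) rfl hxy.symm
  exact ⟨z, hz, hxz⟩

theorem exists_ne_not_adj_of_induce_ne_top (h : ¬ G.induce S = ⊤) :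
    ∃ p ∈ S, ∃ q ∈ S, p ≠ q ∧ ¬ G.Adj p q := by
  by_contra! hS
  refine h (SimpleGraph.ext (funext₂ fun a b => propext ⟨fun hab => ?_, fun hab => ?_⟩))
  · exact (G.ne_of_adj hab) ∘ congrArg Subtype.val
  · exact hS a a.2 b b.2 fun h => hab (Subtype.ext h)

end Connected

theorem _root_.NoCutVertex.connected_induce_sdiff {S : Set V} {p q : V} (hS : NoCutVertex G S)
    (hp : p ∈ S) (hq : q ∈ S) (hpq : p ≠ q) (v : V) : (G.induce (S \ {v})).Connected := by
  by_cases hv : v ∈ S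
  · refine hS.2 v hv fun h => hpq ?_
    exact (h ▸ hp : p ∈ ({v} : Set V)).trans (h ▸ hq : q ∈ ({v} : Set V)).symm
  · rw [Set.sdiff_singleton_eq_self hv]
    exact hS.1

/-- `K` is a union of some, but not all, components of `H \ {v}`. -/
structure IsFlap (G : SimpleGraph V) (H : Set V) (v : V) (K : Set V) : Prop where
  mem : v ∈ H
  subset : K ⊆ H \ {v}
  nonempty : K.Nonempty
  nonempty_sdiff : (H \ insert v K).Nonempty
  door : ∀ k ∈ K, ∀ y ∈ H, G.Adj k y → y ∈ K ∨ y = v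

theorem isFlap_setOf_reachIn {H : Set V} {v y z : V} (hv : v ∈ H) (hz : z ∈ H \ {v})
    (hy : y ∈ H \ {v}) (hzy : ¬ G.ReachIn (H \ {v}) z y) :
    G.IsFlap H v {u | G.ReachIn (H \ {v}) z u} := by
  refine ⟨hv, fun u hu => hu.mem hz, ⟨z, .refl⟩, ⟨y, hy.1, ?_⟩, fun k hk u hu hku => ?_⟩
  · rintro (h | h)
    · exact hy.2 h
    · exact hzy h
  · by_cases huv : u = v
    · exact .inr huv
    · exact .inl (hk.trans (.of_adj (hk.mem hz) ⟨hu, huv⟩ hku))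

theorem exists_isFlap {H : Set V} {v : V} (hv : v ∈ H) (hne : (H \ {v}).Nonempty)
    (hcut : ¬ (G.induce (H \ {v})).Connected) : ∃ K, G.IsFlap H v K := by
  obtain ⟨y, hy⟩ := hne
  obtain ⟨z, hz, hzy⟩ : ∃ z ∈ H \ {v}, ¬ G.ReachIn (H \ {v}) z y := by
    by_contra! h
    exact hcut (connected_induce_of_forall_reachIn hy h)
  exact ⟨_, isFlap_setOf_reachIn hv hz hy hzy⟩

namespace IsFlap

variable {H K : Set V} {v w : V}

theorem notMem (hK : G.IsFlap H v K) : v ∉ K := fun h => (hK.subset h).2 rfl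

theorem compl (hK : G.IsFlap H v K) : G.IsFlap H v (H \ insert v K) := by
  obtain ⟨k, hk⟩ := hK.nonempty
  refine ⟨hK.mem, fun y hy => ⟨hy.1, fun h => hy.2 (.inl h)⟩, hK.nonempty_sdiff,
    ⟨k, (hK.subset hk).1, ?_⟩, fun y hy z hz hyz => ?_⟩
  · rintro (h | h)
    · exact (hK.subset hk).2 h
    · exact h.2 (.inr hk)
  by_cases hzK : z ∈ K
  · rcases hK.door z hzK y hy.1 hyz.symm with h | h
    · exact absurd (.inr h) hy.2
    · exact absurd (.inl h) hy.2
  · by_cases hzv : z = v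
    · exact .inr hzv
    · exact .inl ⟨hz, by rintro (h | h) <;> contradiction⟩

theorem not_connected_induce (hK : G.IsFlap H v K) : ¬ (G.induce (H \ {v})).Connected := by
  intro h
  obtain ⟨k, hk⟩ := hK.nonempty
  obtain ⟨y, hyH, hy⟩ := hK.nonempty_sdiff
  have hyv : y ∈ H \ {v} := ⟨hyH, fun h => hy (.inl h)⟩
  refine hy (.inr (((connected_induce_iff_reachIn.mp h).2 k (hK.subset hk) y hyv).mem_of_closed
    (fun k hk z hz hkz => ?_) hk))
  exact (hK.door k hk z hz.1 hkz).resolve_right hz.2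

theorem exists_adj (hH : (G.induce H).Connected) (hK : G.IsFlap H v K) : ∃ k ∈ K, G.Adj k v := by
  obtain ⟨k, hk⟩ := hK.nonempty
  obtain ⟨k', hk', y, hy, hyK, hadj⟩ := ((connected_induce_iff_reachIn.mp hH).2 k
    (hK.subset hk).1 v hK.mem).exists_adj_of_mem_of_notMem hk hK.notMem
  obtain rfl := (hK.door k' hk' y hy hadj).resolve_left hyK
  exact ⟨k', hk', hadj⟩

theorem connected_induce_sdiff (hH : (G.induce H).Connected) (hK : G.IsFlap H v K) :
    (G.induce (H \ K)).Connected := by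
  refine connected_induce_of_forall_reachIn ⟨hK.mem, hK.notMem⟩ fun y hy => ?_
  exact ((connected_induce_iff_reachIn.mp hH).2 y hy.1 v hK.mem).sdiff_of_door hK.door hy.2
    hK.notMem

theorem isFlap_of_not_connected (hH : (G.induce H).Connected) (hK : G.IsFlap H v K) (hw : w ∈ K)
    (hcut : ¬ (G.induce (H \ {w})).Connected) :
    G.IsFlap H w {y | y ∈ K ∧ y ≠ w ∧ ¬ G.ReachIn (H \ {w}) v y} := by
  have hvw : v ∈ H \ {w} := ⟨hK.mem, fun h => hK.notMem (h ▸ hw)⟩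
  refine ⟨(hK.subset hw).1, fun y hy => ⟨(hK.subset hy.1).1, hy.2.1⟩, ?_,
    ⟨v, hK.mem, ?_⟩, fun c hc y hy hcy => ?_⟩
  · obtain ⟨z, hz, hzv⟩ : ∃ z ∈ H \ {w}, ¬ G.ReachIn (H \ {w}) z v := by
      by_contra! h
      exact hcut (connected_induce_of_forall_reachIn hvw h)
    have hzK : z ∈ K := by
      by_contra hzK
      refine hzv ((((connected_induce_iff_reachIn.mp hH).2 z hz.1 v hK.mem).sdiff_of_door
        hK.door hzK hK.notMem).mono fun u hu => ⟨hu.1, fun h => hu.2 ?_⟩)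
      exact (Set.mem_singleton_iff.mp h) ▸ hw
    exact ⟨z, hzK, hz.2, fun h => hzv h.symm⟩
  · rintro (h | h)
    · exact hvw.2 h
    · exact hK.notMem h.1
  · by_cases hyw : y = w
    · exact .inr hyw
    refine .inl ⟨?_, hyw, fun hvy => hc.2.2 (hvy.trans (.of_adj ⟨hy, hyw⟩ ?_ hcy.symm))⟩
    · refine (hK.door c hc.1 y hy hcy).resolve_right ?_
      rintro rfl
      exact hc.2.2 (.of_adj hvw ⟨(hK.subset hc.1).1, hc.2.1⟩ hcy.symm)
    · exact ⟨(hK.subset hc.1).1, hc.2.1⟩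

theorem exists_forall_connected_induce [Finite V] (hH : (G.induce H).Connected)
    (hK : G.IsFlap H v K) :
    ∃ v' K', G.IsFlap H v' K' ∧ K' ⊆ K ∧ ∀ w ∈ K', (G.induce (H \ {w})).Connected := by
  induction hn : K.ncard using Nat.strong_induction_on generalizing v K with
  | _ n ih =>
  by_cases h : ∀ w ∈ K, (G.induce (H \ {w})).Connected
  · exact ⟨v, K, hK, subset_rfl, h⟩
  push Not at h
  obtain ⟨w, hwK, hw⟩ := h
  have hCK : {y | y ∈ K ∧ y ≠ w ∧ ¬ G.ReachIn (H \ {w}) v y} ⊂ K :=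
    ⟨fun y hy => hy.1, fun h => (h hwK).2.1 rfl⟩
  obtain ⟨v', K', hK', hK'C, hfree⟩ :=
    ih _ (hn ▸ Set.ncard_lt_ncard hCK) (hK.isFlap_of_not_connected hH hwK hw) rfl
  exact ⟨v', K', hK', hK'C.trans hCK.subset, hfree⟩

theorem exists_adj_of_sdiff {S : Set V} {x : V} (hK : G.IsFlap (S \ {x}) v K) (hx : x ∈ S)
    (hS : (G.induce (S \ {v})).Connected) : ∃ a ∈ K, G.Adj x a := by
  obtain ⟨k, hk⟩ := hK.nonempty
  have hkS := hK.subset hk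
  have hxv : x ∈ S \ {v} := ⟨hx, fun h => hK.mem.2 (h ▸ rfl)⟩
  obtain ⟨a, ha, y, hy, hyK, hay⟩ := ((connected_induce_iff_reachIn.mp hS).2 k
    ⟨hkS.1.1, hkS.2⟩ x hxv).exists_adj_of_mem_of_notMem hk fun h => (hK.subset h).1.2 rfl
  by_cases hyx : y = x
  · exact ⟨a, ha, hyx ▸ hay.symm⟩
  · exact absurd ((hK.door a ha y ⟨hy.1, hyx⟩ hay).resolve_left hyK) hy.2

theorem connected_induce_sdiff_pair {a b : V} (hK : G.IsFlap H v K) (hb : b ∈ K) (ha : a ∉ K)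
    (hav : a ≠ v) (hHa : (G.induce (H \ {a})).Connected)
    (hHb : (G.induce (H \ {b})).Connected) : (G.induce (H \ {a, b})).Connected := by
  have hbv : b ≠ v := fun h => hK.notMem (h ▸ hb)
  refine connected_induce_of_forall_reachIn ⟨hK.mem, by rintro (h | h) <;> simp_all⟩
    fun y hy => ?_
  by_cases hyK : y ∈ K
  · refine (((connected_induce_iff_reachIn.mp hHb).2 y ⟨hy.1, fun h => hy.2 (.inr h)⟩ v
      ⟨hK.mem, hbv.symm⟩).inter_insert_of_door (fun k hk z hz => hK.door k hk z hz.1) hyK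
      hK.notMem).mono fun u hu => ⟨hu.1.1, ?_⟩
    rintro (rfl | rfl)
    · rcases hu.2 with rfl | h
      · exact hav rfl
      · exact ha h
    · exact hu.1.2 rfl
  · refine (((connected_induce_iff_reachIn.mp hHa).2 y ⟨hy.1, fun h => hy.2 (.inl h)⟩ v
      ⟨hK.mem, hav.symm⟩).sdiff_of_door (fun k hk z hz => hK.door k hk z hz.1) hyK
      hK.notMem).mono fun u hu => ⟨hu.1.1, ?_⟩
    rintro (rfl | rfl)
    · exact hu.1.2 rfl
    · exact hu.2 hb

end IsFlap

theorem exists_ne_connected_induce_sdiff [Finite V] {S : Set V} {x₀ : V}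
    (hS : (G.induce S).Connected) (hx₀ : x₀ ∈ S) (hne : S ≠ {x₀}) :
    ∃ x ∈ S, x ≠ x₀ ∧ (G.induce (S \ {x})).Connected := by
  obtain ⟨y, hy, hyx₀⟩ := ((Set.nontrivial_iff_ne_singleton hx₀).mpr hne).exists_ne x₀
  by_cases hcut : (G.induce (S \ {y})).Connected
  · exact ⟨y, hy, hyx₀, hcut⟩
  obtain ⟨K, hK⟩ := exists_isFlap hy ⟨x₀, hx₀, Ne.symm hyx₀⟩ hcut
  obtain ⟨K, hK, hx₀K⟩ : ∃ K, G.IsFlap S y K ∧ x₀ ∉ K := by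
    by_cases hx₀K : x₀ ∈ K
    · exact ⟨_, hK.compl, fun h => h.2 (.inr hx₀K)⟩
    · exact ⟨K, hK, hx₀K⟩
  obtain ⟨_, K', hK', hK'K, hfree⟩ := hK.exists_forall_connected_induce hS
  obtain ⟨w, hw⟩ := hK'.nonempty
  exact ⟨w, (hK'.subset hw).1, fun h => hx₀K (h ▸ hK'K hw), hfree w hw⟩

noncomputable def degIn (G : SimpleGraph V) (S : Set V) (x : V) : ℕ :=
  (G.neighborSet x ∩ S).ncard

section degIn

variable {S T K A : Set V} {x y : V}

theorem degIn_eq_ncard_of_subset (hA : A ⊆ G.neighborSet x) : G.degIn A x = A.ncard := by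
  rw [degIn, Set.inter_eq_right.mpr hA]

theorem ncard_neighborSet_induce (S : Set V) (x : S) :
    ((G.induce S).neighborSet x).ncard = G.degIn S x := by
  rw [degIn, ← Set.ncard_image_of_injective _ Subtype.val_injective]
  congr 1
  ext y
  exact ⟨fun ⟨y', hxy, hy⟩ => hy ▸ ⟨hxy, y'.2⟩, fun ⟨hxy, hy⟩ => ⟨⟨y, hy⟩, hxy, rfl⟩⟩

variable [Finite V]

theorem degIn_mono (hST : S ⊆ T) : G.degIn S x ≤ G.degIn T x :=
  Set.ncard_le_ncard (Set.inter_subset_inter_right _ hST)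

theorem degIn_add_degIn_sdiff (hKS : K ⊆ S) : G.degIn K x + G.degIn (S \ K) x = G.degIn S x := by
  rw [degIn, degIn, degIn, ← Set.ncard_union_eq (by tauto_set), ← Set.inter_union_distrib_left,
    Set.union_sdiff_cancel hKS]

theorem degIn_pos (hy : y ∈ S) (hxy : G.Adj x y) : 0 < G.degIn S x :=
  (Set.ncard_pos (Set.toFinite _)).mpr ⟨y, hxy, hy⟩

theorem exists_adj_notMem_of_ncard_lt_degIn (h : A.ncard < G.degIn S x) :
    ∃ y ∈ S, G.Adj x y ∧ y ∉ A := by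
  obtain ⟨y, ⟨hxy, hy⟩, hyA⟩ := Set.exists_mem_notMem_of_ncard_lt_ncard h
  exact ⟨y, hy, hxy, hyA⟩

theorem two_le_degIn_of_noCutVertex {p q : V} (hS : NoCutVertex G S) (hp : p ∈ S) (hq : q ∈ S)
    (hpq : p ≠ q) (hnadj : ¬ G.Adj p q) : 2 ≤ G.degIn S p := by
  obtain ⟨z, hz, hpz⟩ := exists_adj_of_connected_induce hS.1 hp hq hpq
  obtain ⟨z', hz', hpz'⟩ := exists_adj_of_connected_induce (hS.connected_induce_sdiff hp hq hpq z)
    ⟨hp, G.ne_of_adj hpz⟩ ⟨hq, fun h => hnadj ((Set.mem_singleton_iff.mp h).symm ▸ hpz)⟩ hpq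
  have := G.degIn_add_degIn_sdiff (x := p) (Set.singleton_subset_iff.mpr hz)
  have := degIn_pos hz' hpz'
  have := degIn_pos (Set.mem_singleton z) hpz
  omega

end degIn

section Brooks

variable {S : Set V} {p q : V}

theorem exists_adj_adj_not_adj (hS : (G.induce S).Connected) (hp : p ∈ S) (hq : q ∈ S)
    (hpq : p ≠ q) (hnadj : ¬ G.Adj p q) :
    ∃ x ∈ S, ∃ a ∈ S, ∃ b ∈ S, G.Adj x a ∧ G.Adj x b ∧ a ≠ b ∧ ¬ G.Adj a b := by
  by_contra! h
  have hclose : ∀ y, G.ReachIn S p y → y = p ∨ G.Adj p y := by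
    intro y hy
    induction hy with
    | refl => exact .inl rfl
    | @tail y z hpy hyz ih =>
      rcases ih with rfl | hpy'
      · exact .inr hyz.2.2
      · by_cases hzp : z = p
        · exact .inl hzp
        · exact .inr (h y hyz.1 p hp z hyz.2.1 hpy'.symm hyz.2.2 (Ne.symm hzp))
  rcases hclose q ((connected_induce_iff_reachIn.mp hS).2 p hp q hq) with h | h
  · exact hpq h.symm
  · exact hnadj h

variable [Finite V]

/-- Here `{x, v}` separates `S`: one takes `a` and `b` in two flaps of `S \ {x}` whose vertices
are not cut vertices of `S \ {x}`. -/
theorem exists_brooks_triple_of_not_connected (hS : NoCutVertex G S) (hp : p ∈ S) (hq : q ∈ S)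
    (hpq : p ≠ q) {x v : V} (hx : x ∈ S) (hdeg : 3 ≤ G.degIn S x)
    (hcut : ¬ (G.induce ((S \ {x}) \ {v})).Connected) :
    ∃ a ∈ S, ∃ b ∈ S, G.Adj x a ∧ G.Adj x b ∧ a ≠ b ∧ ¬ G.Adj a b ∧
      (G.induce (S \ {a, b})).Connected := by
  have hH := hS.connected_induce_sdiff hp hq hpq x
  have hS' := hS.connected_induce_sdiff hp hq hpq
  have hvH : v ∈ S \ {x} := by
    by_contra hv
    exact hcut (by rwa [Set.sdiff_singleton_eq_self hv])
  obtain ⟨y, hy, hxy, hyv⟩ := G.exists_adj_notMem_of_ncard_lt_degIn (S := S) (x := x) (A := {v})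
    (by rw [Set.ncard_singleton]; omega)
  obtain ⟨K, hK⟩ := exists_isFlap hvH ⟨y, ⟨hy, (G.ne_of_adj hxy).symm⟩, hyv⟩ hcut
  obtain ⟨v₁, K₁, hK₁, -, hfree₁⟩ := hK.exists_forall_connected_induce hH
  obtain ⟨v₂, K₂, hK₂, hK₂K₁, hfree₂⟩ := hK₁.compl.exists_forall_connected_induce hH
  obtain ⟨a, ha, hxa⟩ := hK₁.exists_adj_of_sdiff hx (hS' v₁)
  obtain ⟨b, hb, hxb⟩ := hK₂.exists_adj_of_sdiff hx (hS' v₂)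
  have haK₂ : a ∉ K₂ := fun h => (hK₂K₁ h).2 (.inr ha)
  have hv₂K₁ : v₂ ∉ K₁ := fun h => hK₂.not_connected_induce (hfree₁ v₂ h)
  have hnab : ¬ G.Adj a b := fun h => by
    rcases hK₁.door a ha b (hK₂.subset hb).1 h with h | h
    · exact (hK₂K₁ hb).2 (.inr h)
    · exact (hK₂K₁ hb).2 (.inl h)
  have hHab := hK₂.connected_induce_sdiff_pair hb haK₂ (fun h => hv₂K₁ (h ▸ ha))
    (hfree₁ a ha) (hfree₂ b hb)
  obtain ⟨z, hz, hxz, hzab⟩ := G.exists_adj_notMem_of_ncard_lt_degIn (S := S) (A := {a, b})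
    (((Set.ncard_insert_le a {b}).trans_eq (by rw [Set.ncard_singleton])).trans_lt hdeg)
  refine ⟨a, (hK₁.subset ha).1.1, b, (hK₂.subset hb).1.1, hxa, hxb,
    fun h => haK₂ (h ▸ hb), hnab, ?_⟩
  have hxab : x ∉ ({a, b} : Set V) := by
    rintro (h | h)
    · exact G.ne_of_adj hxa h
    · exact G.ne_of_adj hxb h
  rw [← Set.insert_eq_of_mem (show x ∈ S \ {a, b} from ⟨hx, hxab⟩), ← Set.insert_sdiff_singleton,
    sdiff_right_comm]
  exact connected_induce_insert hHab ⟨⟨hz, (G.ne_of_adj hxz).symm⟩, hzab⟩ hxz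

theorem exists_brooks_triple (hS : NoCutVertex G S) (hp : p ∈ S) (hq : q ∈ S) (hpq : p ≠ q)
    (hnadj : ¬ G.Adj p q) (hdeg : ∀ x ∈ S, 3 ≤ G.degIn S x) :
    ∃ x ∈ S, ∃ a ∈ S, ∃ b ∈ S, G.Adj x a ∧ G.Adj x b ∧ a ≠ b ∧ ¬ G.Adj a b ∧
      (G.induce (S \ {a, b})).Connected := by
  by_cases h3 : ∀ x ∈ S, ∀ v, (G.induce ((S \ {x}) \ {v})).Connected
  · obtain ⟨x, hx, a, ha, b, hb, hxa, hxb, hab, hnab⟩ :=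
      exists_adj_adj_not_adj hS.1 hp hq hpq hnadj
    refine ⟨x, hx, a, ha, b, hb, hxa, hxb, hab, hnab, ?_⟩
    rw [Set.insert_eq, ← Set.sdiff_sdiff]
    exact h3 a ha b
  · push Not at h3
    obtain ⟨x, hx, v, hcut⟩ := h3
    exact ⟨x, hx, exists_brooks_triple_of_not_connected hS hp hq hpq hx (hdeg x hx) hcut⟩

end Brooks

theorem ncard_neighborSet_cycleGraph (n : ℕ) (i : Fin (n + 3)) :
    ((cycleGraph (n + 3)).neighborSet i).ncard = 2 := by
  rw [Set.ncard_eq_toFinset_card', Set.toFinset_card, card_neighborSet_eq_degree,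
    cycleGraph_degree_three_le]

/-- A cycle of `H` is a copy of `cycleGraph n`; as `H` is `2`-regular, the neighbours of each
vertex of the copy are already in it, so by connectedness the copy is all of `H`. -/
theorem Connected.exists_iso_cycleGraph {W : Type*} [Finite W] {H : SimpleGraph W}
    (hH : H.Connected) (h2 : ∀ w, (H.neighborSet w).ncard = 2) :
    ∃ n, Nonempty (H ≃g cycleGraph n) := by
  obtain ⟨w⟩ := hH.nonempty
  obtain ⟨p, hp, -⟩ := IsCycles.exists_cycle_toSubgraph_verts_eq_connectedComponentSupp
    (c := H.connectedComponentMk w) (fun v _ => h2 v) rfl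
    (Set.nonempty_of_ncard_ne_zero (by rw [h2]; omega))
  obtain ⟨m, hm⟩ : ∃ m, p.length = m + 3 := ⟨p.length - 3, by have := hp.three_le_length; omega⟩
  obtain ⟨f⟩ := (cycleGraph_isContained_iff (by omega : 2 < m + 3)).mpr ⟨w, p, hp, hm⟩
  have hnbr : ∀ i, H.neighborSet (f i) = f '' (cycleGraph (m + 3)).neighborSet i := by
    intro i
    refine (Set.eq_of_subset_of_ncard_le ?_ ?_ (Set.toFinite _)).symm
    · rintro _ ⟨j, hij, rfl⟩
      exact f.toHom.map_adj hij
    · rw [h2, Set.ncard_image_of_injective (f := f) _ f.injective, ncard_neighborSet_cycleGraph]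
  have hsurj : Function.Surjective f := by
    intro v
    have := (reachable_iff_reflTransGen _ _).mp (hH.preconnected (f 0) v)
    induction this with
    | refl => exact ⟨0, rfl⟩
    | tail _ hvu ih =>
      obtain ⟨i, rfl⟩ := ih
      obtain ⟨j, -, hj⟩ := (hnbr i).subset hvu
      exact ⟨j, hj⟩
  refine ⟨m + 3, ⟨(RelIso.symm ⟨Equiv.ofBijective f ⟨f.injective, hsurj⟩, fun {i j} => ?_⟩)⟩⟩
  refine ⟨fun h => ?_, f.toHom.map_adj⟩
  obtain ⟨k, hk, hkj⟩ := (hnbr i).subset (show f j ∈ H.neighborSet (f i) from h)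
  exact f.injective hkj ▸ hk

def IsListColoringOn (G : SimpleGraph V) (S : Set V) (L : V → Finset α) (c : V → α) : Prop :=
  (∀ x ∈ S, c x ∈ L x) ∧ ∀ x ∈ S, ∀ y ∈ S, G.Adj x y → c x ≠ c y

def ListColorableOn (G : SimpleGraph V) (S : Set V) (L : V → Finset α) : Prop :=
  ∃ c, G.IsListColoringOn S L c

open Classical in
noncomputable def residualLists (G : SimpleGraph V) (K : Set V) (c : V → α) (L : V → Finset α)
    (x : V) : Finset α :=
  (L x).filter fun a => ∀ y ∈ K, G.Adj x y → c y ≠ a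

section ListColoring

open Finset

variable {S K : Set V} {L : V → Finset α} {c : V → α} {x : V}

theorem mem_residualLists {a : α} :
    a ∈ G.residualLists K c L x ↔ a ∈ L x ∧ ∀ y ∈ K, G.Adj x y → c y ≠ a := by
  classical
  exact mem_filter

theorem IsListColoringOn.piecewise [DecidablePred (· ∈ K)] {c' : V → α}
    (hc : G.IsListColoringOn K L c) (hc' : G.IsListColoringOn (S \ K) (G.residualLists K c L) c') :
    G.IsListColoringOn S L (K.piecewise c c') := by
  have hmem : ∀ y ∈ S, y ∉ K → c' y ∈ G.residualLists K c L y :=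
    fun y hy hyK => hc'.1 y ⟨hy, hyK⟩
  refine ⟨fun y hy => ?_, fun y hy z hz hyz => ?_⟩
  · by_cases hyK : y ∈ K
    · simpa [hyK] using hc.1 y hyK
    · simpa [hyK] using (mem_residualLists.mp (hmem y hy hyK)).1
  · by_cases hyK : y ∈ K <;> by_cases hzK : z ∈ K <;> simp only [Set.piecewise_eq_of_mem,
      Set.piecewise_eq_of_notMem, hyK, hzK, not_false_eq_true]
    · exact hc.2 y hyK z hzK hyz
    · exact (mem_residualLists.mp (hmem z hz hzK)).2 y hyK hyz.symm
    · exact ((mem_residualLists.mp (hmem y hy hyK)).2 z hzK hyz).symm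
    · exact hc'.2 y ⟨hy, hyK⟩ z ⟨hz, hzK⟩ hyz

theorem ListColorableOn.of_residualLists (hc : G.IsListColoringOn K L c)
    (h : G.ListColorableOn (S \ K) (G.residualLists K c L)) : G.ListColorableOn S L := by
  classical
  obtain ⟨c', hc'⟩ := h
  exact ⟨_, hc.piecewise hc'⟩

theorem isListColoringOn_const {a : α} (hK : ∀ x ∈ K, ∀ y ∈ K, ¬ G.Adj x y)
    (ha : ∀ x ∈ K, a ∈ L x) : G.IsListColoringOn K L fun _ => a :=
  ⟨ha, fun x hx y hy hxy => absurd hxy (hK x hx y hy)⟩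

variable [Finite V]

theorem card_le_card_residualLists_add :
    #(L x) ≤ #(G.residualLists K c L x) + (c '' (G.neighborSet x ∩ K)).ncard := by
  classical
  have hfin := (Set.toFinite (G.neighborSet x ∩ K)).image c
  rw [Set.ncard_eq_toFinset_card _ hfin]
  refine (card_le_card fun a ha => ?_).trans (card_union_le _ _)
  by_cases h : ∀ y ∈ K, G.Adj x y → c y ≠ a
  · exact mem_union_left _ (mem_residualLists.mpr ⟨ha, h⟩)
  · push Not at h
    obtain ⟨y, hy, hxy, rfl⟩ := h
    exact mem_union_right _ (hfin.mem_toFinset.mpr ⟨y, ⟨hxy, hy⟩, rfl⟩)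

theorem degIn_sdiff_add_card_le (hKS : K ⊆ S) :
    G.degIn (S \ K) x + #(L x) ≤ G.degIn S x + #(G.residualLists K c L x) := by
  have := G.degIn_add_degIn_sdiff (x := x) hKS
  have : (c '' (G.neighborSet x ∩ K)).ncard ≤ G.degIn K x := Set.ncard_image_le (Set.toFinite _)
  have := card_le_card_residualLists_add (G := G) (K := K) (c := c) (L := L) (x := x)
  omega

theorem listColorableOn_of_degIn_lt {x₀ : V} (hS : (G.induce S).Connected)
    (hL : ∀ x ∈ S, G.degIn S x ≤ #(L x)) (hx₀ : x₀ ∈ S) (hslack : G.degIn S x₀ < #(L x₀)) :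
    G.ListColorableOn S L := by
  induction hn : S.ncard using Nat.strong_induction_on generalizing S L with
  | _ n ih =>
  by_cases hS₀ : S = {x₀}
  · subst hS₀
    obtain ⟨a, ha⟩ := card_pos.mp (Nat.zero_lt_of_lt hslack)
    exact ⟨_, isListColoringOn_const (a := a) (by simp_all) (by simp_all)⟩
  obtain ⟨x₁, hx₁, hx₁₀, hS'⟩ := exists_ne_connected_induce_sdiff hS hx₀ hS₀
  obtain ⟨z, hz, hx₁z⟩ := exists_adj_of_connected_induce hS hx₁ hx₀ hx₁₀
  obtain ⟨a, ha⟩ := card_pos.mp ((degIn_pos hz hx₁z).trans_le (hL x₁ hx₁))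
  refine ListColorableOn.of_residualLists (K := {x₁}) (c := fun _ => a)
    (isListColoringOn_const (by simp_all) (by simp_all)) ?_
  have hres := fun x => G.degIn_sdiff_add_card_le (x := x) (c := fun _ => a) (L := L)
    (Set.singleton_subset_iff.mpr hx₁)
  refine ih _ (hn ▸ Set.ncard_sdiff_singleton_lt_of_mem hx₁) hS' (fun x hx => ?_)
    ⟨hx₀, hx₁₀.symm⟩ ?_ rfl
  · have := hres x
    have := hL x hx.1
    omega
  · have := hres x₀
    omega

theorem listColorableOn_of_degIn_eq_two {C : Finset α} (hS : (G.induce S).Connected)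
    (h2 : ∀ x ∈ S, G.degIn S x = 2) (hodd : ¬ ∃ n, Odd n ∧ Nonempty (G.induce S ≃g cycleGraph n))
    (hC : #C = 2) (hL : ∀ x ∈ S, C ⊆ L x) : G.ListColorableOn S L := by
  classical
  obtain ⟨n, ⟨e⟩⟩ := hS.exists_iso_cycleGraph fun x => by rw [ncard_neighborSet_induce, h2 x x.2]
  have col := cycleGraph.bicoloring_of_even n (Nat.not_odd_iff_even.mp fun h => hodd ⟨n, h, ⟨e⟩⟩)
  obtain ⟨a, b, hab, rfl⟩ := card_eq_two.mp hC
  refine ⟨fun x => if h : x ∈ S then (if col (e ⟨x, h⟩) then a else b) else a,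
    fun x hx => hL x hx ?_, fun x hx y hy hxy => ?_⟩
  · simp only [dif_pos hx]
    split_ifs <;> simp
  · have := col.valid (e.map_adj_iff.mpr (show (G.induce S).Adj ⟨x, hx⟩ ⟨y, hy⟩ from hxy))
    simp only [dif_pos hx, dif_pos hy]
    split_ifs with h₁ h₂ h₂
    · exact absurd (h₁.trans h₂.symm) this
    · exact hab
    · exact hab.symm
    · exact absurd ((Bool.not_eq_true _).mp h₁ |>.trans ((Bool.not_eq_true _).mp h₂).symm) this

theorem listColorableOn_of_adj_of_mem_of_notMem {u w : V} {a : α}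
    (hS : (G.induce (S \ {u})).Connected) (hu : u ∈ S) (hw : w ∈ S) (huw : G.Adj u w)
    (hau : a ∈ L u) (haw : a ∉ L w) (hL : ∀ x ∈ S, G.degIn S x ≤ #(L x)) :
    G.ListColorableOn S L := by
  refine ListColorableOn.of_residualLists (K := {u}) (c := fun _ => a)
    (isListColoringOn_const (by simp_all) (by simp_all)) ?_
  have hres := fun x => G.degIn_sdiff_add_card_le (x := x) (c := fun _ => a) (L := L)
    (Set.singleton_subset_iff.mpr hu)
  refine listColorableOn_of_degIn_lt hS (fun x hx => ?_) ⟨hw, G.ne_of_adj huw.symm⟩ ?_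
  · have := hres x
    have := hL x hx.1
    omega
  · have := G.degIn_add_degIn_sdiff (x := w) (Set.singleton_subset_iff.mpr hu)
    have := degIn_pos (Set.mem_singleton u) huw.symm
    have : #(L w) ≤ #(G.residualLists {u} (fun _ => a) L w) :=
      card_le_card fun b hb => mem_residualLists.mpr ⟨hb, fun _ _ _ h => haw (h ▸ hb)⟩
    have := hL w hw
    omega

theorem listColorableOn_of_brooks_triple {x a b : V} {γ : α} (hx : x ∈ S) (ha : a ∈ S)
    (hb : b ∈ S) (hxa : G.Adj x a) (hxb : G.Adj x b) (hab : a ≠ b) (hnab : ¬ G.Adj a b)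
    (hS : (G.induce (S \ {a, b})).Connected) (hL : ∀ y ∈ S, G.degIn S y ≤ #(L y))
    (hγa : γ ∈ L a) (hγb : γ ∈ L b) : G.ListColorableOn S L := by
  have hK : {a, b} ⊆ S := Set.insert_subset ha (Set.singleton_subset_iff.mpr hb)
  refine ListColorableOn.of_residualLists (K := {a, b}) (c := fun _ => γ)
    (isListColoringOn_const ?_ (by simp [hγa, hγb])) ?_
  · rintro y (rfl | rfl) z (rfl | rfl) <;> simp_all [G.adj_comm]
  have hres := fun y => G.degIn_sdiff_add_card_le (x := y) (c := fun _ => γ) (L := L) hK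
  refine listColorableOn_of_degIn_lt hS (fun y hy => ?_) ⟨hx, ?_⟩ ?_
  · have := hres y
    have := hL y hy.1
    omega
  · rintro (h | h)
    · exact G.ne_of_adj hxa h
    · exact G.ne_of_adj hxb h
  · have := G.degIn_add_degIn_sdiff (x := x) hK
    have : G.degIn {a, b} x = 2 := by
      rw [degIn_eq_ncard_of_subset (by simp [Set.insert_subset_iff, hxa, hxb]),
        Set.ncard_pair hab]
    have := card_le_card_residualLists_add (G := G) (K := {a, b}) (c := fun _ => γ) (L := L)
      (x := x)
    have : ((fun _ => γ) '' (G.neighborSet x ∩ {a, b})).ncard ≤ 1 :=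
      (Set.ncard_le_ncard (t := {γ}) (Set.image_subset_iff.mpr fun _ _ => rfl)).trans_eq
        (Set.ncard_singleton γ)
    have := hL x hx
    omega

theorem listColorableOn_of_noCutVertex (hS : NoCutVertex G S) (htop : ¬ G.induce S = ⊤)
    (hodd : ¬ ∃ n, Odd n ∧ Nonempty (G.induce S ≃g cycleGraph n))
    (hL : ∀ x ∈ S, G.degIn S x = #(L x)) : G.ListColorableOn S L := by
  obtain ⟨p, hp, q, hq, hpq, hnadj⟩ := exists_ne_not_adj_of_induce_ne_top htop
  by_cases hdiff : ∃ u ∈ S, ∃ w ∈ S, G.Adj u w ∧ ∃ a ∈ L u, a ∉ L w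
  · obtain ⟨u, hu, w, hw, huw, a, hau, haw⟩ := hdiff
    exact listColorableOn_of_adj_of_mem_of_notMem (hS.connected_induce_sdiff hp hq hpq u) hu hw
      huw hau haw fun x hx => (hL x hx).le
  push Not at hdiff
  have hLp : ∀ x ∈ S, L x = L p := fun x hx =>
    ((connected_induce_iff_reachIn.mp hS.1).2 x hx p hp).eq_of_forall_adj
      fun u hu w hw huw => Subset.antisymm (hdiff u hu w hw huw) (hdiff w hw u hu huw.symm)
  have hdeg : ∀ x ∈ S, G.degIn S x = #(L p) := fun x hx => hLp x hx ▸ hL x hx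
  have h2 := hdeg p hp ▸ two_le_degIn_of_noCutVertex hS hp hq hpq hnadj
  rcases (show #(L p) = 2 ∨ 3 ≤ #(L p) by omega) with hk | hk
  · exact listColorableOn_of_degIn_eq_two hS.1 (fun x hx => (hdeg x hx).trans hk) hodd hk
      fun x hx => (hLp x hx).ge
  · obtain ⟨x, hx, a, ha, b, hb, hxa, hxb, hab, hnab, hconn⟩ :=
      exists_brooks_triple hS hp hq hpq hnadj fun x hx => hdeg x hx ▸ hk
    obtain ⟨γ, hγ⟩ := card_pos.mp (by omega : 0 < #(L p))
    exact listColorableOn_of_brooks_triple hx ha hb hxa hxb hab hnab hconn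
      (fun y hy => (hL y hy).le) (hLp a ha ▸ hγ) (hLp b hb ▸ hγ)

end ListColoring

/-- `B` is a block of `G.induce S`, in the sense of `IsBlock`. -/
def IsBlockIn (G : SimpleGraph V) (S B : Set V) : Prop :=
  B ⊆ S ∧ NoCutVertex G B ∧ ∀ B', B ⊆ B' → B' ⊆ S → NoCutVertex G B' → B = B'

theorem exists_isFlap_connected_disjoint {S B : Set V} {v : V} (hv : v ∈ S)
    (hcut : ¬ (G.induce (S \ {v})).Connected) (hBS : B ⊆ S)
    (hB : (G.induce (B \ {v})).Connected) :
    ∃ K, G.IsFlap S v K ∧ (G.induce K).Connected ∧ Disjoint B K := by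
  obtain ⟨⟨b, hb⟩⟩ := hB.nonempty
  obtain ⟨z, hz, hzb⟩ : ∃ z ∈ S \ {v}, ¬ G.ReachIn (S \ {v}) z b := by
    by_contra! h
    exact hcut (connected_induce_of_forall_reachIn ⟨hBS hb.1, hb.2⟩ h)
  refine ⟨_, isFlap_setOf_reachIn hv hz ⟨hBS hb.1, hb.2⟩ hzb, connected_induce_setOf_reachIn _ _,
    Set.disjoint_left.mpr fun y hyB hyK => hzb (hyK.trans ?_)⟩
  exact ((connected_induce_iff_reachIn.mp hB).2 y ⟨hyB, (hyK.mem hz).2⟩ b hb).mono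
    (Set.sdiff_subset_sdiff_left hBS)

open Finset in
theorem listColorableOn_of_isBlockIn [Finite V] {S : Set V} {L : V → Finset α}
    (hS : (G.induce S).Connected) (hL : ∀ x ∈ S, G.degIn S x ≤ #(L x))
    (h : (∃ x ∈ S, G.degIn S x < #(L x)) ∨ ∃ B, G.IsBlockIn S B ∧ ¬ G.induce B = ⊤ ∧
      ¬ ∃ n, Odd n ∧ Nonempty (G.induce B ≃g cycleGraph n)) :
    G.ListColorableOn S L := by
  induction hn : S.ncard using Nat.strong_induction_on generalizing S L with
  | _ n ih =>
  by_cases hslack : ∃ x ∈ S, G.degIn S x < #(L x)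
  · obtain ⟨x, hx, hlt⟩ := hslack
    exact listColorableOn_of_degIn_lt hS hL hx hlt
  obtain ⟨B, ⟨hBS, hB, hBmax⟩, htop, hodd⟩ := h.resolve_left hslack
  push Not at hslack
  by_cases hcut : ∀ v ∈ S, (G.induce (S \ {v})).Connected
  · obtain rfl := hBmax S hBS subset_rfl ⟨hS, fun v hv _ => hcut v hv⟩
    exact listColorableOn_of_noCutVertex hB htop hodd fun x hx => (hL x hx).antisymm (hslack x hx)
  push Not at hcut
  obtain ⟨v, hv, hcut⟩ := hcut
  obtain ⟨p, hp, q, hq, hpq, -⟩ := exists_ne_not_adj_of_induce_ne_top htop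
  obtain ⟨K, hK, hKconn, hBK⟩ :=
    exists_isFlap_connected_disjoint hv hcut hBS (hB.connected_induce_sdiff hp hq hpq v)
  have hKS : K ⊆ S := fun k hk => (hK.subset hk).1
  have hvK : v ∈ S \ K := ⟨hv, hK.notMem⟩
  obtain ⟨c, hc⟩ : G.ListColorableOn K L := by
    obtain ⟨k, hk, hkv⟩ := hK.exists_adj hS
    refine ih _ (hn ▸ Set.ncard_lt_ncard ⟨hKS, fun h => hvK.2 (h hv)⟩) hKconn
      (fun x hx => (degIn_mono hKS).trans (hL x (hKS hx))) (.inl ⟨k, hk, ?_⟩) rfl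
    have := G.degIn_add_degIn_sdiff (x := k) hKS
    have := degIn_pos hvK hkv
    have := hL k (hKS hk)
    omega
  refine ListColorableOn.of_residualLists hc (ih _ ?_ (hK.connected_induce_sdiff hS)
    (fun x hx => ?_) (.inr ⟨B, ⟨?_, hB, ?_⟩, htop, hodd⟩) rfl)
  · obtain ⟨k, hk⟩ := hK.nonempty
    exact hn ▸ Set.ncard_lt_ncard ⟨Set.sdiff_subset, fun h => (h (hKS hk)).2 hk⟩
  · have := G.degIn_sdiff_add_card_le (x := x) (c := c) (L := L) hKS
    have := hL x hx.1
    omega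
  · exact fun b hb => ⟨hBS hb, Set.disjoint_left.mp hBK hb⟩
  · exact fun B' h1 h2 h3 => hBmax B' h1 (h2.trans Set.sdiff_subset) h3

end SimpleGraph

/-- Erdős–Rubin–Taylor / Borodin: degree-choosability. -/
theorem stmt14 [Fintype V] (G : SimpleGraph V) (hconn : G.Connected)
    (L : V → Finset ℕ) (hL : ∀ v, deg G v ≤ (L v).card)
    (h : (∃ v, deg G v < (L v).card) ∨
      ∃ B : Set V, IsBlock G B ∧
        ¬ (G.induce B = ⊤) ∧
        ¬ (∃ n : ℕ, Odd n ∧ Nonempty ((G.induce B) ≃g cycleGraph n))) :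
    ∃ c : V → ℕ, (∀ v, c v ∈ L v) ∧ ∀ u v, G.Adj u v → c u ≠ c v := by
  have hdeg : ∀ v, deg G v = G.degIn Set.univ v := fun v => by
    rw [degIn, Set.inter_univ]
    rfl
  obtain ⟨c, hc⟩ := G.listColorableOn_of_isBlockIn (S := Set.univ)
    ((Iso.connected_iff G.induceUnivIso).mpr hconn) (fun v _ => hdeg v ▸ hL v) (by
      rcases h with ⟨v, hv⟩ | ⟨B, hB, htop, hodd⟩
      · exact .inl ⟨v, trivial, hdeg v ▸ hv⟩
      · exact .inr ⟨B, ⟨Set.subset_univ B, hB.1, fun B' h1 _ h3 => hB.2 B' h1 h3⟩, htop, hodd⟩)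
  exact ⟨c, fun v => hc.1 v trivial, fun u v huv => hc.2 u trivial v trivial huv⟩
end
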